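/- arXiv:2011.00525 — 2 statements merged into one kernel-verified Lean document; each statement's English description precedes it below -/
import Mathlib

section
/- Let (H, ω) be a complex symplectic space and let L1, L2, L3 be Lagrangian subspaces of H. Then the Maslov form of the triple (L1, L2, L3) is Hermitian: for all a, b ∈ (L1 + L2) ∩ L3 with decompositions a = a1 + a2 and b = b1 + b2 (a1, b1 ∈ L1, a2, b2 ∈ L2), one has ω(a1, b2) = conj(ω(b1, a2)). -/
open Complex

/-- A nondegenerate skew-Hermitian sesquilinear form (conjugate-linear in the
first variable, linear in the second). -/
structure IsSymplForm {H : Type*} [AddCommGroup H] [Module ℂ H] (ω : H → H → ℂ) : Prop where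
  add_left : ∀ x y z : H, ω (x + y) z = ω x z + ω y z
  smul_left : ∀ (c : ℂ) (x y : H), ω (c • x) y = (starRingEnd ℂ) c * ω x y
  add_right : ∀ x y z : H, ω x (y + z) = ω x y + ω x z
  smul_right : ∀ (c : ℂ) (x y : H), ω x (c • y) = c * ω x y
  skew : ∀ x y : H, ω y x = -((starRingEnd ℂ) (ω x y))
  nondeg : ∀ x : H, (∀ y : H, ω x y = 0) → x = 0

/-- A subspace is Lagrangian if it equals its orthogonal complement. -/
def IsLagrangian {H : Type*} [AddCommGroup H] [Module ℂ H]
    (ω : H → H → ℂ) (L : Submodule ℂ H) : Prop :=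
  (L : Set H) = {x : H | ∀ l ∈ L, ω x l = 0}

/-- A choice of the `L1`-component of a decomposition of `x ∈ L1 ⊔ L2`. -/
noncomputable def firstPart {H : Type*} [AddCommGroup H] [Module ℂ H]
    (L1 L2 : Submodule ℂ H) (x : H) : H :=
  letI := Classical.propDecidable (x ∈ L1 ⊔ L2)
  if hx : x ∈ L1 ⊔ L2 then Classical.choose (Submodule.mem_sup.mp hx) else 0

/-- The Maslov form of a triple of Lagrangians, computed via a choice of
decompositions: `ψ(a,b) = ω(a₁, b₂)`. -/
noncomputable def maslovForm {H : Type*} [AddCommGroup H] [Module ℂ H]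
    (ω : H → H → ℂ) (L1 L2 : Submodule ℂ H) (a b : H) : ℂ :=
  ω (firstPart L1 L2 a) (b - firstPart L1 L2 b)

/-- The maximal dimension of a subspace of `W` on which `ψ` is positive definite. -/
noncomputable def posIndex {H : Type*} [AddCommGroup H] [Module ℂ H]
    (ψ : H → H → ℂ) (W : Submodule ℂ H) : ℕ :=
  sSup {d : ℕ | ∃ S : Submodule ℂ H, S ≤ W ∧ Module.finrank ℂ S = d ∧
    ∀ x ∈ S, x ≠ 0 → 0 < (ψ x x).re}

/-- The maximal dimension of a subspace of `W` on which `ψ` is negative definite. -/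
noncomputable def negIndex {H : Type*} [AddCommGroup H] [Module ℂ H]
    (ψ : H → H → ℂ) (W : Submodule ℂ H) : ℕ :=
  sSup {d : ℕ | ∃ S : Submodule ℂ H, S ≤ W ∧ Module.finrank ℂ S = d ∧
    ∀ x ∈ S, x ≠ 0 → (ψ x x).re < 0}

/-- The Maslov triple index: the signature of the Maslov form of `(L1, L2, L3)`
on `(L1 ⊔ L2) ⊓ L3`. -/
noncomputable def maslovIndex {H : Type*} [AddCommGroup H] [Module ℂ H]
    (ω : H → H → ℂ) (L1 L2 L3 : Submodule ℂ H) : ℤ :=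
  (posIndex (maslovForm ω L1 L2) ((L1 ⊔ L2) ⊓ L3) : ℤ) -
  (negIndex (maslovForm ω L1 L2) ((L1 ⊔ L2) ⊓ L3) : ℤ)

/-- The Maslov form of a triple of Lagrangians is Hermitian:
`ω(a₁, b₂) = conj (ω(b₁, a₂))`. -/
theorem maslovForm_hermitian {H : Type*} [AddCommGroup H] [Module ℂ H]
    [FiniteDimensional ℂ H]
    (ω : H → H → ℂ) (hω : IsSymplForm ω)
    (L1 L2 L3 : Submodule ℂ H)
    (h1 : IsLagrangian ω L1) (h2 : IsLagrangian ω L2) (h3 : IsLagrangian ω L3)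
    (a b : H) (ha : a ∈ (L1 ⊔ L2) ⊓ L3) (hb : b ∈ (L1 ⊔ L2) ⊓ L3)
    (a1 a2 b1 b2 : H)
    (ha1 : a1 ∈ L1) (ha2 : a2 ∈ L2) (hb1 : b1 ∈ L1) (hb2 : b2 ∈ L2)
    (haa : a = a1 + a2) (hbb : b = b1 + b2) :
    ω a1 b2 = (starRingEnd ℂ) (ω b1 a2) := by
    have hA : a ∈ L3 := ha.2
    have hB : b ∈ L3 := hb.2
    have ortho : ∀ (L : Submodule ℂ H), IsLagrangian ω L →
        ∀ x ∈ L, ∀ y ∈ L, ω x y = 0 := by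
      intro L hL x hx y hy
      have hx' : x ∈ {z : H | ∀ l ∈ L, ω z l = 0} := hL ▸ hx
      exact hx' y hy
    have h3' : ω a b = 0 := ortho L3 h3 a hA b hB
    have h11 : ω a1 b1 = 0 := ortho L1 h1 a1 ha1 b1 hb1
    have h22 : ω a2 b2 = 0 := ortho L2 h2 a2 ha2 b2 hb2
    have hexp : ω a b = ω a1 b1 + ω a1 b2 + (ω a2 b1 + ω a2 b2) := by
      rw [haa, hbb, hω.add_left, hω.add_right, hω.add_right]
    have : ω a1 b2 = -(ω a2 b1) := by
      have := h3'.symm.trans hexp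
      rw [h11, h22] at this
      linear_combination -this
    rw [this, hω.skew b1 a2]
    simp
end

section
/- Let H be a 2k-dimensional complex vector space with symplectic basis μ_1, …, μ_k, λ_1, …, λ_k, let c : {1, …, k} → {1, …, n} be a surjective map (a coloring), and let d_1, …, d_k be real numbers. Set M = span_ℂ{μ_1, …, μ_k}, L = span_ℂ{λ_1, …, λ_k}, and let P be the complex span of the vectors μ_i − μ_j for all pairs i, j with c(i) = c(j), together with the vectors v_s = Σ_{i : c(i)=s} (λ_i + d_i μ_i) for each color s ∈ {1, …, n}. Then P is a Lagrangian subspace of H and the Maslov triple index satisfies τ(M, P, L) = Σ_{s=1}^n sign( Σ_{i : c(i)=s} d_i ). -/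
open Complex

/-- The integer-valued sign of a real number, with `signZ 0 = 0`. -/
noncomputable def signZ (x : ℝ) : ℤ :=
  if 0 < x then 1 else if x < 0 then -1 else 0

/-! `M` and `P` are isotropic, so the Maslov form `ψ` may be computed from any decomposition
along `M + P`. The space `(M + P) ∩ L` is spanned by the color sums `w_s = ∑_{c(i)=s} λ_i`,
and `w_s = v_s - e_s` with `e_s = ∑_{c(i)=s} dᵢ μᵢ ∈ M`; hence
`ψ(w_s, w_t) = ω(-e_s, v_t) = δ_{st} ∑_{c(i)=s} dᵢ`. So `ψ` is diagonal in the basis `(w_s)`, and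
its signature is the sum of the signs of the diagonal entries.

`P` is Lagrangian: if `x ⊥ P`, then `ω(x, μ_j)` only depends on the color of `j`, so subtracting
a combination of the `v_s` from `x` leaves a vector orthogonal to `M`, hence in `M`. A vector of
`M` orthogonal to every `v_s` has coefficient sum zero on every color, hence lies in the span of
the differences `μᵢ - μⱼ`. -/

open Finset

namespace IsSymplForm

variable {H : Type*} [AddCommGroup H] [Module ℂ H] {ω : H → H → ℂ}

def toSesq (hω : IsSymplForm ω) : H →ₛₗ[starRingEnd ℂ] H →ₗ[ℂ] ℂ :=
  LinearMap.mk₂'ₛₗ (starRingEnd ℂ) (RingHom.id ℂ) ω hω.add_left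
    (fun c x y => by rw [hω.smul_left]; rfl) hω.add_right (fun c x y => by rw [hω.smul_right]; rfl)

@[simp] lemma toSesq_apply (hω : IsSymplForm ω) (x y : H) : hω.toSesq x y = ω x y := rfl

lemma map_sum_left (hω : IsSymplForm ω) {ι : Type*} (t : Finset ι) (f : ι → H) (y : H) :
    ω (∑ i ∈ t, f i) y = ∑ i ∈ t, ω (f i) y :=
  map_sum (hω.toSesq.flip y) f t

lemma map_sum_right (hω : IsSymplForm ω) {ι : Type*} (x : H) (t : Finset ι) (f : ι → H) :
    ω x (∑ i ∈ t, f i) = ∑ i ∈ t, ω x (f i) :=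
  map_sum (hω.toSesq x) f t

lemma sub_left (hω : IsSymplForm ω) (x y z : H) : ω (x - y) z = ω x z - ω y z :=
  map_sub (hω.toSesq.flip z) x y

lemma sub_right (hω : IsSymplForm ω) (x y z : H) : ω x (y - z) = ω x y - ω x z :=
  map_sub (hω.toSesq x) y z

lemma neg_left (hω : IsSymplForm ω) (x y : H) : ω (-x) y = -ω x y :=
  map_neg (hω.toSesq.flip y) x

lemma zero_right (hω : IsSymplForm ω) (x : H) : ω x 0 = 0 :=
  map_zero (hω.toSesq x)

lemma eq_zero_of_mem_span (hω : IsSymplForm ω) {S T : Set H}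
    (h : ∀ x ∈ S, ∀ y ∈ T, ω x y = 0) {x y : H}
    (hx : x ∈ Submodule.span ℂ S) (hy : y ∈ Submodule.span ℂ T) : ω x y = 0 := by
  have hS : ∀ y ∈ T, Submodule.span ℂ S ≤ LinearMap.ker (hω.toSesq.flip y) := fun y hy =>
    Submodule.span_le.2 fun x hx => h x hx y hy
  have hT : Submodule.span ℂ T ≤ LinearMap.ker (hω.toSesq x) :=
    Submodule.span_le.2 fun y hy => hS y hy hx
  exact hT hy

end IsSymplForm

section Lagrangian

variable {H : Type*} [AddCommGroup H] [Module ℂ H] {ω : H → H → ℂ}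

lemma firstPart_spec {L1 L2 : Submodule ℂ H} {x : H} (hx : x ∈ L1 ⊔ L2) :
    firstPart L1 L2 x ∈ L1 ∧ x - firstPart L1 L2 x ∈ L2 := by
  rw [firstPart, dif_pos hx]
  obtain ⟨hy, z, hz, hyz⟩ := Classical.choose_spec (Submodule.mem_sup.mp hx)
  exact ⟨hy, by rw [← eq_sub_of_add_eq' hyz]; exact hz⟩

def IsIsotropic (ω : H → H → ℂ) (W : Submodule ℂ H) : Prop :=
  ∀ x ∈ W, ∀ y ∈ W, ω x y = 0

lemma IsIsotropic.isLagrangian {W : Submodule ℂ H} (hW : IsIsotropic ω W)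
    (h : ∀ x, (∀ l ∈ W, ω x l = 0) → x ∈ W) : IsLagrangian ω W :=
  Set.Subset.antisymm (fun x hx l hl => hW x hx l hl) h

lemma isIsotropic_span (hω : IsSymplForm ω) {S : Set H} (h : ∀ x ∈ S, ∀ y ∈ S, ω x y = 0) :
    IsIsotropic ω (Submodule.span ℂ S) :=
  fun _ hx _ hy => hω.eq_zero_of_mem_span h hx hy

lemma maslovForm_eq_of_mem (hω : IsSymplForm ω) {M P : Submodule ℂ H}
    (hM : IsIsotropic ω M) (hP : IsIsotropic ω P) {x y x₁ y₁ : H}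
    (hx₁ : x₁ ∈ M) (hx₂ : x - x₁ ∈ P) (hy₁ : y₁ ∈ M) (hy₂ : y - y₁ ∈ P) :
    maslovForm ω M P x y = ω x₁ (y - y₁) := by
  have hmem : ∀ {z z₁ : H}, z₁ ∈ M → z - z₁ ∈ P → z ∈ M ⊔ P := fun {z z₁} h₁ h₂ => by
    simpa using Submodule.add_mem_sup h₁ h₂
  obtain ⟨hf₁, hf₂⟩ := firstPart_spec (hmem hx₁ hx₂)
  obtain ⟨hg₁, hg₂⟩ := firstPart_spec (hmem hy₁ hy₂)
  set f := firstPart M P x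
  set g := firstPart M P y
  -- the two choices of `M`-part differ by an element of `M ⊓ P`, which pairs trivially
  have hδP : f - x₁ ∈ P := by simpa using sub_mem hx₂ hf₂
  have key : ω f (y - g) = hω.toSesq (x₁ + (f - x₁)) ((y - y₁) + (y₁ - g)) := by
    congr 1 <;> abel
  rw [maslovForm, key]
  simp only [map_add, LinearMap.add_apply, IsSymplForm.toSesq_apply]
  rw [hM _ hx₁ _ (sub_mem hy₁ hg₁), hP _ hδP _ hy₂, hM _ (sub_mem hf₁ hx₁) _ (sub_mem hy₁ hg₁)]
  ring

end Lagrangian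

section Signature

variable {H : Type*} [AddCommGroup H] [Module ℂ H]

lemma negIndex_eq_posIndex_neg (ψ : H → H → ℂ) (W : Submodule ℂ H) :
    negIndex ψ W = posIndex (fun x y => -ψ x y) W := by
  simp only [negIndex, posIndex, neg_re, neg_pos]

lemma finrank_le_posIndex {ψ : H → H → ℂ} {W S : Submodule ℂ H} [FiniteDimensional ℂ W]
    (hSW : S ≤ W) (hS : ∀ x ∈ S, x ≠ 0 → 0 < (ψ x x).re) :
    Module.finrank ℂ S ≤ posIndex ψ W := by
  refine le_csSup ⟨Module.finrank ℂ W, ?_⟩ ⟨S, hSW, rfl, hS⟩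
  rintro _ ⟨T, hTW, rfl, -⟩
  exact Submodule.finrank_mono hTW

lemma posIndex_add_finrank_le {ψ : H → H → ℂ} {W N : Submodule ℂ H} [FiniteDimensional ℂ W]
    (hNW : N ≤ W) (hN : ∀ x ∈ N, (ψ x x).re ≤ 0) :
    posIndex ψ W + Module.finrank ℂ N ≤ Module.finrank ℂ W := by
  have := Submodule.finiteDimensional_of_le hNW
  suffices h : posIndex ψ W ≤ Module.finrank ℂ W - Module.finrank ℂ N by
    have := Submodule.finrank_mono hNW
    omega
  refine csSup_le ⟨0, ⊥, bot_le, finrank_bot ℂ H, by simp⟩ ?_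
  rintro _ ⟨S, hSW, rfl, hS⟩
  have := Submodule.finiteDimensional_of_le hSW
  have hSN : S ⊓ N = ⊥ := (Submodule.eq_bot_iff _).2 fun x ⟨hxS, hxN⟩ => by
    by_contra hx
    exact (hS x hxS hx).not_ge (hN x hxN)
  have := Submodule.finrank_sup_add_finrank_inf_eq S N
  have := Submodule.finrank_mono (sup_le hSW hNW)
  rw [hSN, finrank_bot] at *
  omega

lemma exists_eq_sum_of_mem_span_image {ι : Type*} [Fintype ι] {w : ι → H} {p : ι → Prop}
    {x : H} (hx : x ∈ Submodule.span ℂ (w '' {s | p s})) :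
    ∃ a : ι → ℂ, (∀ s, ¬ p s → a s = 0) ∧ x = ∑ s, a s • w s := by
  obtain ⟨l, hl, rfl⟩ := (Finsupp.mem_span_image_iff_linearCombination ℂ).1 hx
  exact ⟨l, fun s hs => Finsupp.notMem_support_iff.1 fun h => hs (hl h),
    by rw [Finsupp.linearCombination_apply, Finsupp.sum_fintype _ _ (by simp)]⟩

lemma finrank_span_image_eq_card {ι : Type*} [Fintype ι] {w : ι → H}
    (hw : LinearIndependent ℂ w) (p : ι → Prop) [DecidablePred p] :
    Module.finrank ℂ (Submodule.span ℂ (w '' {s | p s})) = #{s | p s} := by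
  rw [← Fintype.card_subtype, ← finrank_span_eq_card (hw.comp _ Subtype.val_injective),
    Set.range_comp, Subtype.range_coe_subtype]

variable {ι : Type*} [Fintype ι] {ψ : H → H → ℂ} {w : ι → H} {D : ι → ℝ}

lemma posIndex_span_eq_card (hw : LinearIndependent ℂ w)
    (hψ : ∀ a : ι → ℂ, (ψ (∑ s, a s • w s) (∑ s, a s • w s)).re = ∑ s, normSq (a s) * D s) :
    posIndex ψ (Submodule.span ℂ (Set.range w)) = #{s | 0 < D s} := by
  classical
  have := FiniteDimensional.span_of_finite ℂ (Set.finite_range w)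
  have hle : ∀ p : ι → Prop, Submodule.span ℂ (w '' {s | p s}) ≤ Submodule.span ℂ (Set.range w) :=
    fun p => Submodule.span_mono (Set.image_subset_range _ _)
  apply le_antisymm
  · have := posIndex_add_finrank_le (ψ := ψ) (hle fun s => ¬ 0 < D s) fun x hx => by
      obtain ⟨a, ha, rfl⟩ := exists_eq_sum_of_mem_span_image hx
      rw [hψ]
      refine Finset.sum_nonpos fun s _ => ?_
      by_cases hs : 0 < D s
      · simp [ha s (not_not_intro hs)]
      · exact mul_nonpos_of_nonneg_of_nonpos (normSq_nonneg _) (not_lt.1 hs)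
    have hcard := Finset.card_filter_add_card_filter_not (s := Finset.univ) (fun s => 0 < D s)
    rw [finrank_span_image_eq_card hw, finrank_span_eq_card hw, ← Finset.card_univ] at this
    omega
  · rw [← finrank_span_image_eq_card hw]
    refine finrank_le_posIndex (hle _) fun x hx hx0 => ?_
    obtain ⟨a, ha, rfl⟩ := exists_eq_sum_of_mem_span_image hx
    obtain ⟨s, hs⟩ : ∃ s, a s ≠ 0 := by
      by_contra! h
      simp [h] at hx0
    rw [hψ]
    refine Finset.sum_pos' (fun t _ => ?_) ⟨s, Finset.mem_univ _, ?_⟩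
    · by_cases ht : 0 < D t
      · exact mul_nonneg (normSq_nonneg _) ht.le
      · simp [ha t ht]
    · by_contra h
      exact hs (ha s fun hD => h (mul_pos (normSq_pos.2 hs) hD))

lemma posIndex_sub_negIndex_eq_sum_signZ (hw : LinearIndependent ℂ w)
    (hψ : ∀ a : ι → ℂ, (ψ (∑ s, a s • w s) (∑ s, a s • w s)).re = ∑ s, normSq (a s) * D s) :
    (posIndex ψ (Submodule.span ℂ (Set.range w)) : ℤ) - negIndex ψ (Submodule.span ℂ (Set.range w))
      = ∑ s, signZ (D s) := by
  classical
  have hneg : negIndex ψ (Submodule.span ℂ (Set.range w)) = #{s | 0 < -D s} := by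
    rw [negIndex_eq_posIndex_neg]
    exact posIndex_span_eq_card hw fun a => by simp [hψ, ← Finset.sum_neg_distrib]
  have hsign : ∀ x : ℝ, signZ x = (if 0 < x then 1 else 0) - (if 0 < -x then 1 else 0) := by
    intro x
    rcases lt_trichotomy x 0 with h | rfl | h
    · simp [signZ, h, h.not_gt]
    · simp [signZ]
    · simp [signZ, h, h.not_gt]
  rw [posIndex_span_eq_card hw hψ, hneg, Finset.sum_congr rfl fun s _ => hsign (D s),
    Finset.sum_sub_distrib, Finset.sum_boole, Finset.sum_boole]

end Signature

section Fibers

variable {ι κ : Type*} [Fintype ι] [DecidableEq κ] (c : ι → κ)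

def fiberSum {M : Type*} [AddCommMonoid M] (f : ι → M) (s : κ) : M :=
  ∑ i with c i = s, f i

lemma fiberSum_add {M : Type*} [AddCommMonoid M] (f g : ι → M) (s : κ) :
    fiberSum c (fun i => f i + g i) s = fiberSum c f s + fiberSum c g s :=
  Finset.sum_add_distrib

lemma fiberSum_ite_eq {M : Type*} [AddCommMonoid M] [DecidableEq ι] (j : ι) (f : ι → M) (s : κ) :
    fiberSum c (fun i => if j = i then f i else 0) s = if c j = s then f j else 0 := by
  simp [fiberSum, Finset.sum_ite_eq]

lemma sum_smul_mem_span_sub {R M : Type*} [Ring R] [AddCommGroup M] [Module R M] [Fintype κ]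
    (μ : ι → M) {γ : ι → R} (hγ : ∀ s, fiberSum c γ s = 0) :
    ∑ i, γ i • μ i ∈ Submodule.span R {x | ∃ i j, c i = c j ∧ x = μ i - μ j} := by
  classical
  rcases isEmpty_or_nonempty ι with hι | hι
  · simp
  set r : ι → ι := fun i => Function.invFun c (c i)
  have hr : ∀ i, c (r i) = c i := fun i => Function.invFun_eq ⟨i, rfl⟩
  have hrep : ∑ i, γ i • μ (r i) = 0 := by
    rw [← Finset.sum_fiberwise Finset.univ c]
    refine Finset.sum_eq_zero fun s _ => ?_
    have : ∀ i ∈ ({i | c i = s} : Finset ι), γ i • μ (r i) = γ i • μ (Function.invFun c s) :=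
      fun i hi => by simp only [r, (Finset.mem_filter.1 hi).2]
    rw [Finset.sum_congr rfl this, ← Finset.sum_smul, show ∑ i with c i = s, γ i = 0 from hγ s,
      zero_smul]
  have hsplit : ∑ i, γ i • μ i = ∑ i, γ i • (μ i - μ (r i)) := by
    simp only [smul_sub, Finset.sum_sub_distrib, hrep, sub_zero]
  rw [hsplit]
  exact Submodule.sum_mem _ fun i _ =>
    Submodule.smul_mem _ _ (Submodule.subset_span ⟨i, r i, (hr i).symm, rfl⟩)

end Fibers

structure IsSymplecticFamily {ι H : Type*} [DecidableEq ι] [AddCommGroup H] [Module ℂ H]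
    (ω : H → H → ℂ) (μ lam : ι → H) : Prop where
  mu_mu : ∀ i j, ω (μ i) (μ j) = 0
  lam_lam : ∀ i j, ω (lam i) (lam j) = 0
  mu_lam : ∀ i j, ω (μ i) (lam j) = if i = j then -1 else 0

namespace IsSymplecticFamily

variable {ι H : Type*} [DecidableEq ι] [AddCommGroup H] [Module ℂ H]
  {ω : H → H → ℂ} {μ lam : ι → H}

lemma lam_mu (hω : IsSymplForm ω) (hS : IsSymplecticFamily ω μ lam) (i j : ι) :
    ω (lam i) (μ j) = if i = j then 1 else 0 := by
  rw [hω.skew, hS.mu_lam]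
  rcases eq_or_ne i j with rfl | h
  · simp
  · simp [h, h.symm]

lemma isIsotropic_span_mu (hω : IsSymplForm ω) (hS : IsSymplecticFamily ω μ lam) :
    IsIsotropic ω (Submodule.span ℂ (Set.range μ)) :=
  isIsotropic_span hω <| by
    rintro _ ⟨i, rfl⟩ _ ⟨j, rfl⟩
    exact hS.mu_mu i j

lemma sum_smul_lam_mu [Fintype ι] (hω : IsSymplForm ω) (hS : IsSymplecticFamily ω μ lam) (β : ι → ℂ)
    (j : ι) : ω (∑ i, β i • lam i) (μ j) = starRingEnd ℂ (β j) := by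
  simp [hω.map_sum_left, hω.smul_left, hS.lam_mu hω]

lemma disjoint_span [Fintype ι] (hω : IsSymplForm ω) (hS : IsSymplecticFamily ω μ lam) :
    Disjoint (Submodule.span ℂ (Set.range μ)) (Submodule.span ℂ (Set.range lam)) := by
  refine Submodule.disjoint_def.2 fun x hxM hxL => ?_
  obtain ⟨β, rfl⟩ := (Submodule.mem_span_range_iff_exists_fun ℂ).1 hxL
  -- `x` pairs trivially with every `μ j` since `M` is isotropic, so its `λ`-coordinates vanish
  have hβ : ∀ j, β j = 0 := fun j => by
    simpa [hS.sum_smul_lam_mu hω] using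
      hS.isIsotropic_span_mu hω _ hxM _ (Submodule.subset_span ⟨j, rfl⟩)
  simp [hβ]

lemma mem_span_mu_of_forall_eq_zero [Fintype ι] (hω : IsSymplForm ω)
    (hS : IsSymplecticFamily ω μ lam)
    (hML : Submodule.span ℂ (Set.range μ) ⊔ Submodule.span ℂ (Set.range lam) = ⊤) {x : H}
    (hx : ∀ j, ω x (μ j) = 0) : x ∈ Submodule.span ℂ (Set.range μ) := by
  obtain ⟨m, hm, l, hl, rfl⟩ := Submodule.mem_sup.1 (hML ▸ Submodule.mem_top (x := x))
  obtain ⟨β, rfl⟩ := (Submodule.mem_span_range_iff_exists_fun ℂ).1 hl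
  have hβ : ∀ j, β j = 0 := fun j => by
    have := hx j
    rwa [hω.add_left, hS.isIsotropic_span_mu hω _ hm _ (Submodule.subset_span ⟨j, rfl⟩),
      zero_add, hS.sum_smul_lam_mu hω, map_eq_zero] at this
  simpa [hβ] using hm

end IsSymplecticFamily

section Colored

variable {ι κ H : Type*} [Fintype ι] [DecidableEq κ] [AddCommGroup H] [Module ℂ H]

def colorVec (μ lam : ι → H) (c : ι → κ) (d : ι → ℝ) : κ → H :=
  fiberSum c fun i => lam i + (d i : ℂ) • μ i

def coloredLagrangian (μ lam : ι → H) (c : ι → κ) (d : ι → ℝ) : Submodule ℂ H :=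
  Submodule.span ℂ ({x | ∃ i j, c i = c j ∧ x = μ i - μ j} ∪ Set.range (colorVec μ lam c d))

lemma colorVec_eq_add (μ lam : ι → H) (c : ι → κ) (d : ι → ℝ) (s : κ) :
    colorVec μ lam c d s = fiberSum c lam s + fiberSum c (fun i => (d i : ℂ) • μ i) s :=
  fiberSum_add c _ _ s

lemma fiberSum_smul_mem_span {μ : ι → H} (c : ι → κ) (d : ι → ℝ) (s : κ) :
    fiberSum c (fun i => (d i : ℂ) • μ i) s ∈ Submodule.span ℂ (Set.range μ) :=
  Submodule.sum_mem _ fun i _ => Submodule.smul_mem _ _ (Submodule.subset_span ⟨i, rfl⟩)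

lemma colorVec_mem_coloredLagrangian {μ lam : ι → H} (c : ι → κ) (d : ι → ℝ) (s : κ) :
    colorVec μ lam c d s ∈ coloredLagrangian μ lam c d :=
  Submodule.subset_span (Or.inr ⟨s, rfl⟩)

variable [DecidableEq ι] {ω : H → H → ℂ} {μ lam : ι → H} (c : ι → κ) (d : ι → ℝ)

lemma mu_fiberSum_lam (hω : IsSymplForm ω) (hS : IsSymplecticFamily ω μ lam) (j : ι) (s : κ) :
    ω (μ j) (fiberSum c lam s) = if c j = s then -1 else 0 := by
  simp [fiberSum, hω.map_sum_right, hS.mu_lam, Finset.sum_ite_eq]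

lemma mu_colorVec (hω : IsSymplForm ω) (hS : IsSymplecticFamily ω μ lam) (j : ι) (s : κ) :
    ω (μ j) (colorVec μ lam c d s) = if c j = s then -1 else 0 := by
  rw [colorVec, fiberSum, hω.map_sum_right]
  simp only [hω.add_right, hω.smul_right, hS.mu_lam, hS.mu_mu, mul_zero, add_zero]
  exact fiberSum_ite_eq c j _ s

lemma colorVec_mu (hω : IsSymplForm ω) (hS : IsSymplecticFamily ω μ lam) (s : κ) (j : ι) :
    ω (colorVec μ lam c d s) (μ j) = if c j = s then 1 else 0 := by
  rw [hω.skew, mu_colorVec c d hω hS]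
  split_ifs <;> simp

lemma lam_colorVec (hω : IsSymplForm ω) (hS : IsSymplecticFamily ω μ lam) (j : ι) (s : κ) :
    ω (lam j) (colorVec μ lam c d s) = if c j = s then (d j : ℂ) else 0 := by
  rw [colorVec, fiberSum, hω.map_sum_right]
  simp only [hω.add_right, hω.smul_right, hS.lam_lam, hS.lam_mu hω, mul_ite, mul_one, mul_zero,
    zero_add]
  exact fiberSum_ite_eq c j _ s

lemma fiberSum_smul_mu_colorVec (hω : IsSymplForm ω) (hS : IsSymplecticFamily ω μ lam) (s t : κ) :
    ω (fiberSum c (fun i => (d i : ℂ) • μ i) s) (colorVec μ lam c d t)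
      = if s = t then -((fiberSum c d s : ℝ) : ℂ) else 0 := by
  have hterm : ∀ i ∈ ({i | c i = s} : Finset ι), ω ((d i : ℂ) • μ i) (colorVec μ lam c d t)
      = (d i : ℂ) * if s = t then -1 else 0 := fun i hi => by
    rw [hω.smul_left, mu_colorVec c d hω hS, Complex.conj_ofReal, (Finset.mem_filter.1 hi).2]
  rw [fiberSum, hω.map_sum_left, Finset.sum_congr rfl hterm, ← Finset.sum_mul, fiberSum]
  push_cast
  split_ifs <;> simp

lemma colorVec_colorVec (hω : IsSymplForm ω) (hS : IsSymplecticFamily ω μ lam) (s t : κ) :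
    ω (colorVec μ lam c d s) (colorVec μ lam c d t) = 0 := by
  change ω (∑ i with c i = s, (lam i + (d i : ℂ) • μ i)) _ = 0
  rw [hω.map_sum_left]
  refine Finset.sum_eq_zero fun i _ => ?_
  rw [hω.add_left, hω.smul_left, lam_colorVec c d hω hS, mu_colorVec c d hω hS,
    Complex.conj_ofReal]
  split_ifs <;> ring

end Colored

section ColoredLagrangian

variable {ι κ H : Type*} [Fintype ι] [DecidableEq ι] [DecidableEq κ] [AddCommGroup H]
  [Module ℂ H] {ω : H → H → ℂ} {μ lam : ι → H} (c : ι → κ) (d : ι → ℝ)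

lemma isIsotropic_coloredLagrangian (hω : IsSymplForm ω) (hS : IsSymplecticFamily ω μ lam) :
    IsIsotropic ω (coloredLagrangian μ lam c d) := by
  refine isIsotropic_span hω ?_
  rintro _ (⟨i, j, hij, rfl⟩ | ⟨s, rfl⟩) _ (⟨p, q, hpq, rfl⟩ | ⟨t, rfl⟩)
  · simp [hω.sub_left, hω.sub_right, hS.mu_mu]
  · rw [hω.sub_left, mu_colorVec c d hω hS, mu_colorVec c d hω hS, hij, sub_self]
  · rw [hω.sub_right, colorVec_mu c d hω hS, colorVec_mu c d hω hS, hpq, sub_self]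
  · exact colorVec_colorVec c d hω hS s t

variable [Fintype κ]

lemma mem_coloredLagrangian_of_mem_span_mu (hω : IsSymplForm ω)
    (hS : IsSymplecticFamily ω μ lam) {y : H} (hy : y ∈ Submodule.span ℂ (Set.range μ))
    (hyv : ∀ s, ω y (colorVec μ lam c d s) = 0) : y ∈ coloredLagrangian μ lam c d := by
  obtain ⟨γ, rfl⟩ := (Submodule.mem_span_range_iff_exists_fun ℂ).1 hy
  have hγ : ∀ s, fiberSum c γ s = 0 := fun s => by
    have := hyv s
    simp only [hω.map_sum_left, hω.smul_left, mu_colorVec c d hω hS, mul_ite, mul_neg, mul_one,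
      mul_zero] at this
    rwa [← Finset.sum_filter, Finset.sum_neg_distrib, neg_eq_zero, ← map_sum, map_eq_zero] at this
  exact Submodule.span_mono Set.subset_union_left (sum_smul_mem_span_sub c μ hγ)

lemma isLagrangian_coloredLagrangian (hω : IsSymplForm ω) (hS : IsSymplecticFamily ω μ lam)
    (hML : Submodule.span ℂ (Set.range μ) ⊔ Submodule.span ℂ (Set.range lam) = ⊤)
    (hc : Function.Surjective c) : IsLagrangian ω (coloredLagrangian μ lam c d) := by
  refine (isIsotropic_coloredLagrangian c d hω hS).isLagrangian fun x hx => ?_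
  set g := Function.surjInv hc
  have hconst : ∀ j, ω x (μ j) = ω x (μ (g (c j))) := fun j => by
    have := hx _ (Submodule.subset_span
      (Or.inl ⟨j, g (c j), (Function.surjInv_eq hc _).symm, rfl⟩))
    rwa [hω.sub_right, sub_eq_zero] at this
  set a : κ → ℂ := fun s => starRingEnd ℂ (ω x (μ (g s)))
  set y := x - ∑ s, a s • colorVec μ lam c d s
  have hyM : y ∈ Submodule.span ℂ (Set.range μ) :=
    hS.mem_span_mu_of_forall_eq_zero hω hML fun j => by
      simp only [y, a, hω.sub_left, hω.map_sum_left, hω.smul_left, colorVec_mu c d hω hS,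
        mul_ite, mul_one, mul_zero, Finset.sum_ite_eq, Finset.mem_univ, if_true,
        Complex.conj_conj, ← hconst, sub_self]
  have hyv : ∀ s, ω y (colorVec μ lam c d s) = 0 := fun s => by
    simp only [y, hω.sub_left, hω.map_sum_left, hω.smul_left, colorVec_colorVec c d hω hS,
      mul_zero, Finset.sum_const_zero, sub_zero]
    exact hx _ (colorVec_mem_coloredLagrangian c d s)
  have hyP := mem_coloredLagrangian_of_mem_span_mu c d hω hS hyM hyv
  simpa [y] using add_mem hyP
    (Submodule.sum_mem _ fun s (_ : s ∈ Finset.univ) =>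
      Submodule.smul_mem _ (a s) (colorVec_mem_coloredLagrangian c d s))

end ColoredLagrangian

section MaslovForm

variable {ι κ H : Type*} [Fintype ι] [DecidableEq ι] [DecidableEq κ] [AddCommGroup H]
  [Module ℂ H] {ω : H → H → ℂ} {μ lam : ι → H} (c : ι → κ) (d : ι → ℝ)

lemma sup_inf_coloredLagrangian (hω : IsSymplForm ω) (hS : IsSymplecticFamily ω μ lam) :
    (Submodule.span ℂ (Set.range μ) ⊔ coloredLagrangian μ lam c d) ⊓
      Submodule.span ℂ (Set.range lam) = Submodule.span ℂ (Set.range (fiberSum c lam)) := by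
  set M := Submodule.span ℂ (Set.range μ)
  set L := Submodule.span ℂ (Set.range lam)
  set W := Submodule.span ℂ (Set.range (fiberSum c lam))
  have hWL : W ≤ L := Submodule.span_le.2 <| by
    rintro _ ⟨s, rfl⟩
    exact Submodule.sum_mem _ fun i _ => Submodule.subset_span ⟨i, rfl⟩
  have hPMW : coloredLagrangian μ lam c d ≤ W ⊔ M := Submodule.span_le.2 <| by
    rintro _ (⟨i, j, -, rfl⟩ | ⟨s, rfl⟩)
    · exact Submodule.mem_sup_right
        (sub_mem (Submodule.subset_span ⟨i, rfl⟩) (Submodule.subset_span ⟨j, rfl⟩))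
    · rw [SetLike.mem_coe, colorVec_eq_add]
      exact Submodule.add_mem_sup (Submodule.subset_span ⟨s, rfl⟩) (fiberSum_smul_mem_span c d s)
  have hWMP : W ≤ M ⊔ coloredLagrangian μ lam c d := Submodule.span_le.2 <| by
    rintro _ ⟨s, rfl⟩
    rw [SetLike.mem_coe, eq_sub_of_add_eq (colorVec_eq_add μ lam c d s).symm]
    exact sub_mem (Submodule.mem_sup_right (colorVec_mem_coloredLagrangian c d s))
      (Submodule.mem_sup_left (fiberSum_smul_mem_span c d s))
  refine le_antisymm ?_ (le_inf hWMP hWL)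
  calc (M ⊔ coloredLagrangian μ lam c d) ⊓ L ≤ (W ⊔ M) ⊓ L :=
        inf_le_inf_right _ (sup_le le_sup_right hPMW)
    _ = W := by rw [sup_inf_assoc_of_le _ hWL, (hS.disjoint_span hω).eq_bot, sup_bot_eq]

variable [Fintype κ]

lemma linearIndependent_fiberSum_lam (hω : IsSymplForm ω) (hS : IsSymplecticFamily ω μ lam)
    (hc : Function.Surjective c) : LinearIndependent ℂ (fiberSum c lam) := by
  refine Fintype.linearIndependent_iff.2 fun g hg t => ?_
  have h := congrArg (ω (μ (Function.surjInv hc t))) hg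
  simp only [hω.map_sum_right, hω.smul_right, mu_fiberSum_lam c hω hS, Function.surjInv_eq,
    mul_ite, mul_neg, mul_one, mul_zero, Finset.sum_ite_eq, Finset.mem_univ, if_true] at h
  rwa [hω.zero_right, neg_eq_zero] at h

lemma re_maslovForm_sum_smul_fiberSum_lam (hω : IsSymplForm ω) (hS : IsSymplecticFamily ω μ lam)
    (a : κ → ℂ) :
    (maslovForm ω (Submodule.span ℂ (Set.range μ)) (coloredLagrangian μ lam c d)
      (∑ s, a s • fiberSum c lam s) (∑ s, a s • fiberSum c lam s)).re
      = ∑ s, normSq (a s) * fiberSum c d s := by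
  have hdecomp :
      ∑ s, a s • fiberSum c lam s - -∑ s, a s • fiberSum c (fun i => (d i : ℂ) • μ i) s
        = ∑ s, a s • colorVec μ lam c d s := by
    simp only [colorVec_eq_add, smul_add, Finset.sum_add_distrib, sub_neg_eq_add]
  have hx₁ : -∑ s, a s • fiberSum c (fun i => (d i : ℂ) • μ i) s ∈
      Submodule.span ℂ (Set.range μ) :=
    neg_mem (Submodule.sum_mem _ fun s _ => Submodule.smul_mem _ _ (fiberSum_smul_mem_span c d s))
  have hx₂ : ∑ s, a s • colorVec μ lam c d s ∈ coloredLagrangian μ lam c d :=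
    Submodule.sum_mem _ fun s _ => Submodule.smul_mem _ _ (colorVec_mem_coloredLagrangian c d s)
  rw [← hdecomp] at hx₂
  rw [maslovForm_eq_of_mem hω (hS.isIsotropic_span_mu hω) (isIsotropic_coloredLagrangian c d hω hS)
    hx₁ hx₂ hx₁ hx₂, hdecomp, hω.neg_left, hω.map_sum_left]
  simp only [hω.smul_left, hω.map_sum_right, hω.smul_right, fiberSum_smul_mu_colorVec c d hω hS,
    mul_ite, mul_zero, Finset.sum_ite_eq, Finset.mem_univ, if_true]
  have hterm : ∀ (z : ℂ) (r : ℝ), starRingEnd ℂ z * (z * -(r : ℂ)) = -((normSq z * r : ℝ) : ℂ) := by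
    intro z r
    push_cast
    rw [normSq_eq_conj_mul_self]
    ring
  simp only [hterm, Finset.sum_neg_distrib, neg_neg, ← Complex.ofReal_sum, Complex.ofReal_re]

end MaslovForm

lemma Module.Basis.span_inl_sup_span_inr {ι ι' R H : Type*} [Semiring R] [AddCommMonoid H]
    [Module R H] (b : Module.Basis (ι ⊕ ι') R H) :
    Submodule.span R (Set.range (b ∘ Sum.inl)) ⊔ Submodule.span R (Set.range (b ∘ Sum.inr))
      = ⊤ := by
  rw [← Submodule.span_union, ← Set.Sum.elim_range, Sum.elim_comp_inl_inr, b.span_eq]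

theorem maslovIndex_colored_general {H : Type*} [AddCommGroup H] [Module ℂ H]
    {k n : ℕ}
    (b : Module.Basis (Fin k ⊕ Fin k) ℂ H) (μ lam : Fin k → H)
    (hμ : ∀ i, μ i = b (Sum.inl i)) (hlam : ∀ i, lam i = b (Sum.inr i))
    (ω : H → H → ℂ) (hω : IsSymplForm ω)
    (hμμ : ∀ i j, ω (μ i) (μ j) = 0)
    (hll : ∀ i j, ω (lam i) (lam j) = 0)
    (hml : ∀ i j, ω (μ i) (lam j) = if i = j then -1 else 0)
    (c : Fin k → Fin n) (hc : Function.Surjective c) (d : Fin k → ℝ)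
    (v : Fin n → H)
    (hv : ∀ s, v s = ∑ i ∈ Finset.univ.filter (fun i => c i = s),
      (lam i + (d i : ℂ) • μ i))
    (M L P : Submodule ℂ H)
    (hM : M = Submodule.span ℂ (Set.range μ))
    (hL : L = Submodule.span ℂ (Set.range lam))
    (hP : P = Submodule.span ℂ
      ({x : H | ∃ i j, c i = c j ∧ x = μ i - μ j} ∪ Set.range v)) :
    IsLagrangian ω P ∧
      maslovIndex ω M P L =
        ∑ s, signZ (∑ i ∈ Finset.univ.filter (fun i => c i = s), d i) := by
  obtain rfl : v = colorVec μ lam c d := funext hv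
  obtain rfl : μ = b ∘ Sum.inl := funext hμ
  obtain rfl : lam = b ∘ Sum.inr := funext hlam
  have hS : IsSymplecticFamily ω (b ∘ Sum.inl) (b ∘ Sum.inr) := ⟨hμμ, hll, hml⟩
  obtain rfl : P = coloredLagrangian (b ∘ Sum.inl) (b ∘ Sum.inr) c d := hP
  subst hM hL
  refine ⟨isLagrangian_coloredLagrangian c d hω hS b.span_inl_sup_span_inr hc, ?_⟩
  rw [maslovIndex, sup_inf_coloredLagrangian c d hω hS]
  exact posIndex_sub_negIndex_eq_sum_signZ (linearIndependent_fiberSum_lam c hω hS hc)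
    (re_maslovForm_sum_smul_fiberSum_lam c d hω hS)

/-- For a coloring `c` and reals `d₁, …, d_k`, the subspace `P` spanned by the
differences `μᵢ - μⱼ` (for `c(i) = c(j)`) and the vectors
`v_s = ∑_{c(i)=s} (λᵢ + dᵢ μᵢ)` is Lagrangian, and
`τ(M, P, L) = ∑_s sign(∑_{c(i)=s} dᵢ)`. -/
theorem maslovIndex_colored {H : Type*} [AddCommGroup H] [Module ℂ H]
    {k n : ℕ} (hk : 1 ≤ k)
    (b : Module.Basis (Fin k ⊕ Fin k) ℂ H) (μ lam : Fin k → H)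
    (hμ : ∀ i, μ i = b (Sum.inl i)) (hlam : ∀ i, lam i = b (Sum.inr i))
    (ω : H → H → ℂ) (hω : IsSymplForm ω)
    (hμμ : ∀ i j, ω (μ i) (μ j) = 0)
    (hll : ∀ i j, ω (lam i) (lam j) = 0)
    (hml : ∀ i j, ω (μ i) (lam j) = if i = j then -1 else 0)
    (c : Fin k → Fin n) (hc : Function.Surjective c) (d : Fin k → ℝ)
    (v : Fin n → H)
    (hv : ∀ s, v s = ∑ i ∈ Finset.univ.filter (fun i => c i = s),
      (lam i + (d i : ℂ) • μ i))
    (M L P : Submodule ℂ H)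
    (hM : M = Submodule.span ℂ (Set.range μ))
    (hL : L = Submodule.span ℂ (Set.range lam))
    (hP : P = Submodule.span ℂ
      ({x : H | ∃ i j, c i = c j ∧ x = μ i - μ j} ∪ Set.range v)) :
    IsLagrangian ω P ∧
      maslovIndex ω M P L =
        ∑ s, signZ (∑ i ∈ Finset.univ.filter (fun i => c i = s), d i) :=
  maslovIndex_colored_general b μ lam hμ hlam ω hω hμμ hll hml c hc d v hv M L P hM hL hP
end
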